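/- A simple graph G on a countably infinite vertex set is ME-homogeneous if and only if G is MB-homogeneous or there exists a finite n ≥ 2 such that G is isomorphic to the disjoint union of countably infinitely many complete graphs each on n vertices. -/

import Mathlib

open Classical in
/-- Extend `f` by mapping `a` to `b`. -/
noncomputable def extendBy {V : Type} (f : V → V) (a b : V) : V → V :=
  Function.update f a b

section Defs

variable {V : Type}

/-- `f` is a graph homomorphism on the finite induced subgraph on `A`. -/
def IsHomOn (G : SimpleGraph V) (A : Finset V) (f : V → V) : Prop :=
  ∀ ⦃u v : V⦄, u ∈ A → v ∈ A → G.Adj u v → G.Adj (f u) (f v)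

/-- `f` is an injective graph homomorphism (monomorphism) on `A`. -/
def IsMonOn (G : SimpleGraph V) (A : Finset V) (f : V → V) : Prop :=
  IsHomOn G A f ∧ Set.InjOn f (↑A : Set V)

/-- `f` is an isomorphism of the induced subgraph on `A` onto its image. -/
def IsIsoOn (G : SimpleGraph V) (A : Finset V) (f : V → V) : Prop :=
  Set.InjOn f (↑A : Set V) ∧
    ∀ ⦃u v : V⦄, u ∈ A → v ∈ A → (G.Adj u v ↔ G.Adj (f u) (f v))

/-- `F` is a graph homomorphism `G → G`. -/
def IsHomEndo (G : SimpleGraph V) (F : V → V) : Prop :=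
  ∀ ⦃u v : V⦄, G.Adj u v → G.Adj (F u) (F v)

/-- `F` is an injective graph homomorphism `G → G`. -/
def IsMonEndo (G : SimpleGraph V) (F : V → V) : Prop :=
  IsHomEndo G F ∧ Function.Injective F

/-- `F` is a self-embedding of `G`. -/
def IsEmbEndo (G : SimpleGraph V) (F : V → V) : Prop :=
  Function.Injective F ∧ ∀ u v : V, G.Adj u v ↔ G.Adj (F u) (F v)

/-- `F` is a surjective graph homomorphism `G → G`. -/
def IsEpiEndo (G : SimpleGraph V) (F : V → V) : Prop :=
  IsHomEndo G F ∧ Function.Surjective F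

/-- `F` is a bijective graph homomorphism `G → G`. -/
def IsBiEndo (G : SimpleGraph V) (F : V → V) : Prop :=
  IsHomEndo G F ∧ Function.Bijective F

/-- `F` is an automorphism of `G`. -/
def IsAutEndo (G : SimpleGraph V) (F : V → V) : Prop :=
  Function.Bijective F ∧ ∀ u v : V, G.Adj u v ↔ G.Adj (F u) (F v)

def IsHHHom (G : SimpleGraph V) : Prop :=
  ∀ (A : Finset V) (f : V → V), IsHomOn G A f →
    ∃ F : V → V, IsHomEndo G F ∧ ∀ a ∈ A, F a = f a

def IsHMHom (G : SimpleGraph V) : Prop :=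
  ∀ (A : Finset V) (f : V → V), IsHomOn G A f →
    ∃ F : V → V, IsMonEndo G F ∧ ∀ a ∈ A, F a = f a

def IsHIHom (G : SimpleGraph V) : Prop :=
  ∀ (A : Finset V) (f : V → V), IsHomOn G A f →
    ∃ F : V → V, IsEmbEndo G F ∧ ∀ a ∈ A, F a = f a

def IsHEHom (G : SimpleGraph V) : Prop :=
  ∀ (A : Finset V) (f : V → V), IsHomOn G A f →
    ∃ F : V → V, IsEpiEndo G F ∧ ∀ a ∈ A, F a = f a

def IsHBHom (G : SimpleGraph V) : Prop :=
  ∀ (A : Finset V) (f : V → V), IsHomOn G A f →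
    ∃ F : V → V, IsBiEndo G F ∧ ∀ a ∈ A, F a = f a

def IsHAHom (G : SimpleGraph V) : Prop :=
  ∀ (A : Finset V) (f : V → V), IsHomOn G A f →
    ∃ F : V → V, IsAutEndo G F ∧ ∀ a ∈ A, F a = f a

def IsMHHom (G : SimpleGraph V) : Prop :=
  ∀ (A : Finset V) (f : V → V), IsMonOn G A f →
    ∃ F : V → V, IsHomEndo G F ∧ ∀ a ∈ A, F a = f a

def IsMMHom (G : SimpleGraph V) : Prop :=
  ∀ (A : Finset V) (f : V → V), IsMonOn G A f →
    ∃ F : V → V, IsMonEndo G F ∧ ∀ a ∈ A, F a = f a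

def IsMIHom (G : SimpleGraph V) : Prop :=
  ∀ (A : Finset V) (f : V → V), IsMonOn G A f →
    ∃ F : V → V, IsEmbEndo G F ∧ ∀ a ∈ A, F a = f a

def IsMEHom (G : SimpleGraph V) : Prop :=
  ∀ (A : Finset V) (f : V → V), IsMonOn G A f →
    ∃ F : V → V, IsEpiEndo G F ∧ ∀ a ∈ A, F a = f a

def IsMBHom (G : SimpleGraph V) : Prop :=
  ∀ (A : Finset V) (f : V → V), IsMonOn G A f →
    ∃ F : V → V, IsBiEndo G F ∧ ∀ a ∈ A, F a = f a

def IsMAHom (G : SimpleGraph V) : Prop :=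
  ∀ (A : Finset V) (f : V → V), IsMonOn G A f →
    ∃ F : V → V, IsAutEndo G F ∧ ∀ a ∈ A, F a = f a

def IsIHHom (G : SimpleGraph V) : Prop :=
  ∀ (A : Finset V) (f : V → V), IsIsoOn G A f →
    ∃ F : V → V, IsHomEndo G F ∧ ∀ a ∈ A, F a = f a

def IsIEHom (G : SimpleGraph V) : Prop :=
  ∀ (A : Finset V) (f : V → V), IsIsoOn G A f →
    ∃ F : V → V, IsEpiEndo G F ∧ ∀ a ∈ A, F a = f a

/-- A cone over a finite set `S`: a vertex outside `S` adjacent to every vertex of `S`. -/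
def IsCone (G : SimpleGraph V) (S : Finset V) (v : V) : Prop :=
  v ∉ S ∧ ∀ s ∈ S, G.Adj v s

/-- A co-cone over a finite set `S`: a vertex outside `S` adjacent to no vertex of `S`. -/
def IsCoCone (G : SimpleGraph V) (S : Finset V) (v : V) : Prop :=
  v ∉ S ∧ ∀ s ∈ S, ¬ G.Adj v s

def HasCoCone (G : SimpleGraph V) (S : Finset V) : Prop :=
  ∃ v : V, IsCoCone G S v

open Classical in
/-- Property (†): every finite surjective homomorphism, and vertex `b` outside its image,
admits a preimage `a` outside the domain such that `f ∪ {(a,b)}` is a homomorphism. -/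
def PropDagger (G : SimpleGraph V) : Prop :=
  ∀ (A : Finset V) (f : V → V), IsHomOn G A f →
    ∀ b : V, b ∉ f '' (↑A : Set V) →
      ∃ a : V, a ∉ A ∧ IsHomOn G (insert a A) (extendBy f a b)

open Classical in
/-- Property (*): every finite surjective monomorphism, and vertex `c` outside its domain,
admits an image `d` outside the codomain such that `f ∪ {(c,d)}` is a homomorphism. -/
def PropStar (G : SimpleGraph V) : Prop :=
  ∀ (A : Finset V) (f : V → V), IsMonOn G A f →
    ∀ c : V, c ∉ A →
      ∃ d : V, d ∉ f '' (↑A : Set V) ∧ IsHomOn G (insert c A) (extendBy f c d)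

/-- The disjoint union of `ι`-many complete graphs, each with vertex set `κ`. -/
def cliqueSum (ι κ : Type) : SimpleGraph (ι × κ) :=
  SimpleGraph.fromRel (fun p q => p.1 = q.1)

end Defs

/-!
Call a finite set `X` *bad* if its set of cones (common neighbours) is nonempty but finite.

Without bad sets, an ME-homogeneous graph has the forth property: for a finite monomorphism `f`
and a new vertex `c`, the image under `f` of the neighbours of `c` has a cone by
ME-homogeneity, hence infinitely many, and one of them avoids the finite image of `f`. The back
property comes from the surjectivity of an extending epimorphism, and a back-and-forth along an
enumeration of the vertices gives MB-homogeneity.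

Bad sets do not coexist with a cherry (an induced path `b - w - b'`). Take a bad set `X`
with fewest cones; every cone `z` of `X` then has all its neighbours in `X`, since otherwise
fixing `X` and sending that neighbour to `z` would give `X ∪ {z}` a cone. A cherry gives any two
vertices a common neighbour, so some `x ∈ X` has infinitely many neighbours, and by Ramsey these
contain either a clique of size `|X| + 1`, which a homomorphism sending `x` to `z` squeezes
injectively into `X`, or an independent set of size `|X|`, which together with `z` can be
mapped onto `X ∪ {z}`, carrying the cone `x` to a cone of `X ∪ {z}`.

A cherry-free graph is a disjoint union of cliques. Homomorphisms sending one vertex to another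
map cliques injectively into cliques, so all cliques have the size of the clique of a cone of
the bad set, which is finite and has at least two vertices.

Conversely, a monomorphism of the union of `n`-cliques maps each clique meeting its domain
injectively into one clique; extend it by permutations on these cliques and send the remaining
cliques onto all cliques.
-/

theorem SimpleGraph.exists_isNClique_or_isNClique_compl {V : Type} (G : SimpleGraph V)
    {M : Set V} (hM : M.Infinite) (m k : ℕ) :
    ∃ s : Finset V, ↑s ⊆ M ∧ (G.IsNClique m s ∨ Gᶜ.IsNClique k s) := by
  classical
  induction m generalizing k M with
  | zero => exact ⟨∅, by simp, Or.inl (by simp)⟩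
  | succ m ihm =>
    induction k generalizing M with
    | zero => exact ⟨∅, by simp, Or.inr (by simp)⟩
    | succ k ihk =>
      obtain ⟨v, hv⟩ := hM.nonempty
      by_cases hN : (M ∩ G.neighborSet v).Infinite
      · obtain ⟨s, hsM, hs | hs⟩ := ihm hN (k + 1)
        · refine ⟨insert v s, ?_, Or.inl (hs.insert fun b hb => (hsM hb).2)⟩
          rw [Finset.coe_insert]
          exact Set.insert_subset hv (hsM.trans Set.inter_subset_left)
        · exact ⟨s, hsM.trans Set.inter_subset_left, Or.inr hs⟩
      · have hN' : (M \ insert v (G.neighborSet v)).Infinite :=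
          (hM.sdiff ((Set.not_infinite.1 hN).insert v)).mono fun x hx =>
            ⟨hx.1, fun h => hx.2 (h.imp id fun h' => ⟨hx.1, h'⟩)⟩
        obtain ⟨s, hsM, hs | hs⟩ := ihk hN'
        · exact ⟨s, hsM.trans Set.sdiff_subset, Or.inl hs⟩
        · refine ⟨insert v s, ?_, Or.inr (hs.insert fun b hb => ?_)⟩
          · rw [Finset.coe_insert]
            exact Set.insert_subset hv (hsM.trans Set.sdiff_subset)
          · have hb' := (hsM hb).2
            rw [SimpleGraph.compl_adj]
            exact ⟨fun h => hb' (h ▸ Set.mem_insert v _),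
              fun h => hb' (Set.mem_insert_of_mem v h)⟩

section MEHomogeneous

variable {V : Type} {G : SimpleGraph V}

theorem extendBy_of_ne {f : V → V} {a b v : V} (h : v ≠ a) : extendBy f a b v = f v := by
  simp [extendBy, h]

theorem extendBy_self (f : V → V) (a b : V) : extendBy f a b a = b := by
  simp [extendBy]

theorem IsMonOn.subset {A B : Finset V} {f : V → V} (hf : IsMonOn G A f) (h : B ⊆ A) :
    IsMonOn G B f :=
  ⟨fun _ _ hu hv huv => hf.1 (h hu) (h hv) huv, hf.2.mono (Finset.coe_subset.2 h)⟩

theorem isMonOn_of_isIndepSet {A : Finset V} {f : V → V} (hA : G.IsIndepSet (A : Set V))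
    (hf : Set.InjOn f A) : IsMonOn G A f :=
  ⟨fun _ _ hu hv huv => absurd huv (hA hu hv (G.ne_of_adj huv)), hf⟩

theorem IsMonOn.insert_extendBy [DecidableEq V] {A : Finset V} {f : V → V}
    (hf : IsMonOn G A f) {a b : V} (ha : a ∉ A) (hb : b ∉ f '' A)
    (hadj : ∀ x ∈ A, G.Adj a x → G.Adj b (f x)) :
    IsMonOn G (insert a A) (extendBy f a b) := by
  have hA : Set.EqOn (extendBy f a b) f A := fun x hx =>
    extendBy_of_ne (ne_of_mem_of_not_mem (Finset.mem_coe.1 hx) ha)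
  constructor
  · intro u v hu hv huv
    rcases Finset.mem_insert.1 hu with rfl | huA <;> rcases Finset.mem_insert.1 hv with rfl | hvA
    · exact (G.irrefl huv).elim
    · rw [extendBy_self, hA hvA]
      exact hadj v hvA huv
    · rw [extendBy_self, hA huA]
      exact (hadj u huA huv.symm).symm
    · rw [hA huA, hA hvA]
      exact hf.1 huA hvA huv
  · rw [Finset.coe_insert, Set.injOn_insert (by exact_mod_cast ha), hA.image_eq, extendBy_self]
    exact ⟨hf.2.congr hA.symm, hb⟩

def cones (G : SimpleGraph V) (S : Set V) : Set V := {v | ∀ x ∈ S, G.Adj v x}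

theorem cones_insert_ssubset {S : Set V} {z : V} (hz : z ∈ cones G S) :
    cones G (insert z S) ⊂ cones G S := by
  have hsub : cones G (insert z S) ⊆ cones G S := fun _ hv x hx =>
    hv x (Set.mem_insert_of_mem z hx)
  exact (Set.ssubset_iff_of_subset hsub).2
    ⟨z, hz, fun h => G.irrefl (h z (Set.mem_insert z S))⟩

theorem IsMBHom.isMEHom (h : IsMBHom G) : IsMEHom G := fun A f hf =>
  let ⟨F, ⟨hFhom, hFbij⟩, hFf⟩ := h A f hf
  ⟨F, ⟨hFhom, hFbij.2⟩, hFf⟩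

theorem IsMEHom.cones_image_nonempty (hME : IsMEHom G) {A : Finset V} {f : V → V}
    (hf : IsMonOn G A f) (hA : (cones G A).Nonempty) : (cones G (f '' A)).Nonempty := by
  obtain ⟨F, hF, hFf⟩ := hME A f hf
  obtain ⟨c, hc⟩ := hA
  refine ⟨F c, ?_⟩
  rintro _ ⟨a, ha, rfl⟩
  rw [← hFf a ha]
  exact hF.1 (hc a ha)

theorem IsMEHom.exists_isHomEndo_apply_eq (hME : IsMEHom G) (u v : V) :
    ∃ F, IsHomEndo G F ∧ F u = v := by
  obtain ⟨F, hF, hFu⟩ := hME {u} (fun _ => v)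
    (isMonOn_of_isIndepSet (by simp) (by simp))
  exact ⟨F, hF.1, hFu u (Finset.mem_singleton_self u)⟩

structure PartialMono (G : SimpleGraph V) where
  dom : Finset V
  toFun : V → V
  isMonOn : IsMonOn G dom toFun

instance : Preorder (PartialMono G) where
  le p q := p.dom ⊆ q.dom ∧ Set.EqOn q.toFun p.toFun p.dom
  le_refl p := ⟨subset_rfl, Set.eqOn_refl _ _⟩
  le_trans p q r hpq hqr :=
    ⟨hpq.1.trans hqr.1, (hqr.2.mono (Finset.coe_subset.2 hpq.1)).trans hpq.2⟩

theorem PartialMono.le_mk_insert_extendBy [DecidableEq V] (p : PartialMono G) {a b : V}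
    (ha : a ∉ p.dom) (h : IsMonOn G (insert a p.dom) (extendBy p.toFun a b)) :
    p ≤ ⟨insert a p.dom, extendBy p.toFun a b, h⟩ :=
  ⟨Finset.subset_insert a p.dom, fun _ hx =>
    extendBy_of_ne (ne_of_mem_of_not_mem (Finset.mem_coe.1 hx) ha)⟩

theorem isMBHom_of_isCofinal [Countable V]
    (forth : ∀ c, IsCofinal {q : PartialMono G | c ∈ q.dom})
    (back : ∀ b, IsCofinal {q : PartialMono G | b ∈ q.toFun '' q.dom}) : IsMBHom G := by
  intro A f hf
  have := Encodable.ofCountable V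
  let 𝒟 : V ⊕ V → Order.Cofinal (PartialMono G) :=
    Sum.elim (fun c => ⟨_, forth c⟩) (fun b => ⟨_, back b⟩)
  let s := Order.sequenceOfCofinals ⟨A, f, hf⟩ 𝒟
  have hs : Monotone s := Order.sequenceOfCofinals.monotone _ _
  let N v := Encodable.encode (Sum.inl v : V ⊕ V) + 1
  have hdom v : v ∈ (s (N v)).dom := Order.sequenceOfCofinals.encode_mem _ 𝒟 (Sum.inl v)
  let F v := (s (N v)).toFun v
  have hF {v n} (hv : v ∈ (s n).dom) : F v = (s n).toFun v :=
    ((hs (le_max_left (N v) n)).2 (hdom v)).symm.trans ((hs (le_max_right (N v) n)).2 hv)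
  have hmem {v n} (h : N v ≤ n) : v ∈ (s n).dom := (hs h).1 (hdom v)
  refine ⟨F, ⟨fun u v huv => ?_, fun u v huv => ?_, fun b => ?_⟩, fun a ha => ?_⟩
  · have hu := hmem (le_max_left (N u) (N v))
    have hv := hmem (le_max_right (N u) (N v))
    rw [hF hu, hF hv]
    exact (s _).isMonOn.1 hu hv huv
  · have hu := hmem (le_max_left (N u) (N v))
    have hv := hmem (le_max_right (N u) (N v))
    rw [hF hu, hF hv] at huv
    exact (s _).isMonOn.2 hu hv huv
  · obtain ⟨a, ha, hab⟩ : b ∈ (s _).toFun '' (s _).dom :=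
      Order.sequenceOfCofinals.encode_mem _ 𝒟 (Sum.inr b)
    exact ⟨a, (hF ha).trans hab⟩
  · exact hF (n := 0) ha

def IsBadSet (G : SimpleGraph V) (X : Finset V) : Prop :=
  (cones G X).Nonempty ∧ (cones G X).Finite

theorem IsMEHom.isCofinal_mem_image (hME : IsMEHom G) (b : V) :
    IsCofinal {q : PartialMono G | b ∈ q.toFun '' q.dom} := by
  classical
  intro p
  by_cases hb : b ∈ p.toFun '' p.dom
  · exact ⟨p, hb, le_rfl⟩
  obtain ⟨F, ⟨hFhom, hFsurj⟩, hFf⟩ := hME p.dom p.toFun p.isMonOn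
  obtain ⟨a, rfl⟩ := hFsurj b
  have ha : a ∉ p.dom := fun ha => hb ⟨a, ha, (hFf a ha).symm⟩
  have hext := p.isMonOn.insert_extendBy ha hb fun x hx hax => hFf x hx ▸ hFhom hax
  exact ⟨_, ⟨a, Finset.mem_coe.2 (Finset.mem_insert_self a _), extendBy_self _ _ _⟩,
    p.le_mk_insert_extendBy ha hext⟩

theorem IsMEHom.isCofinal_mem_dom [Infinite V] (hME : IsMEHom G)
    (hnb : ∀ X, ¬ IsBadSet G X) (c : V) : IsCofinal {q : PartialMono G | c ∈ q.dom} := by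
  classical
  intro p
  by_cases hc : c ∈ p.dom
  · exact ⟨p, hc, le_rfl⟩
  let B := p.dom.filter (G.Adj c)
  have hB : (cones G (p.toFun '' B)).Infinite := fun hfin =>
    hnb (B.image p.toFun) ⟨by
      rw [Finset.coe_image]
      exact hME.cones_image_nonempty (p.isMonOn.subset (p.dom.filter_subset _))
        ⟨c, fun x hx => (Finset.mem_filter.1 hx).2⟩, by rwa [Finset.coe_image]⟩
  obtain ⟨d, hd, hdA⟩ := hB.exists_notMem_finite (p.dom.finite_toSet.image p.toFun)
  have hext := p.isMonOn.insert_extendBy hc hdA fun x hx hcx =>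
    hd _ ⟨x, Finset.mem_filter.2 ⟨hx, hcx⟩, rfl⟩
  exact ⟨_, Finset.mem_insert_self c _, p.le_mk_insert_extendBy hc hext⟩

theorem IsMEHom.isMBHom [Countable V] [Infinite V] (hME : IsMEHom G)
    (hnb : ∀ X, ¬ IsBadSet G X) : IsMBHom G :=
  isMBHom_of_isCofinal (hME.isCofinal_mem_dom hnb) hME.isCofinal_mem_image

def HasCherry (G : SimpleGraph V) : Prop :=
  ∃ b b' w : V, b ≠ b' ∧ ¬ G.Adj b b' ∧ G.Adj w b ∧ G.Adj w b'

theorem IsMEHom.exists_adj_adj_of_hasCherry (hME : IsMEHom G) (hch : HasCherry G) {p q : V}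
    (hpq : p ≠ q) : ∃ w, G.Adj w p ∧ G.Adj w q := by
  classical
  obtain ⟨b, b', w, hbb', hnadj, hwb, hwb'⟩ := hch
  let f : V → V := fun v => if v = b then p else q
  have hmon : IsMonOn G {b, b'} f := by
    refine isMonOn_of_isIndepSet ?_ ?_
    · rw [Finset.coe_pair, SimpleGraph.isIndepSet_iff, Set.pairwise_pair]
      exact fun _ => ⟨hnadj, fun h => hnadj h.symm⟩
    · rw [Finset.coe_pair, Set.injOn_pair]
      simp [f, hbb'.symm, hpq]
  obtain ⟨c, hc⟩ := hME.cones_image_nonempty hmon ⟨w, by simp [cones, hwb, hwb']⟩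
  simp only [cones, Finset.coe_pair, Set.image_pair, f, if_pos, if_neg hbb'.symm] at hc
  exact ⟨c, hc p (Set.mem_insert p _), hc q (Set.mem_insert_of_mem p rfl)⟩

theorem IsMEHom.cones_insert_nonempty (hME : IsMEHom G) {X : Finset V} {z q : V}
    (hz : z ∈ cones G X) (hqX : q ∉ X) (hzq : G.Adj z q) :
    (cones G (insert z ↑X)).Nonempty := by
  classical
  have hzX : z ∉ id '' (X : Set V) := fun ⟨x, hx, hxz⟩ => G.irrefl (hxz ▸ hz x hx)
  have hmon : IsMonOn G (insert q X) (extendBy id q z) :=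
    IsMonOn.insert_extendBy ⟨fun _ _ _ _ h => h, Set.injOn_id _⟩ hqX hzX fun x hx _ => hz x hx
  have himage : extendBy id q z '' ↑(insert q X) = insert z ↑X := by
    rw [Finset.coe_insert, Set.image_insert_eq, extendBy_self, Set.image_congr fun x hx =>
      extendBy_of_ne (ne_of_mem_of_not_mem (Finset.mem_coe.1 hx) hqX), Set.image_id]
  rw [← himage]
  refine hME.cones_image_nonempty hmon ⟨z, fun y hy => ?_⟩
  rcases Set.mem_insert_iff.1 (Finset.coe_insert q X ▸ hy) with rfl | hy
  exacts [hzq, hz y hy]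

theorem IsMEHom.card_le_of_isClique (hME : IsMEHom G) {x z : V} {X : Finset V}
    (hz : G.neighborSet z ⊆ X) {s : Finset V} (hs : G.IsClique (s : Set V))
    (hsx : ↑s ⊆ G.neighborSet x) : s.card ≤ X.card := by
  obtain ⟨F, hF, hFx⟩ := hME.exists_isHomEndo_apply_eq x z
  refine Finset.card_le_card_of_injOn F (fun y hy => hz (hFx ▸ hF (hsx hy)))
    fun y hy y' hy' h => ?_
  by_contra hne
  exact (hF (hs hy hy' hne)).ne h

theorem IsMEHom.cones_insert_nonempty_of_isNIndepSet (hME : IsMEHom G) {X : Finset V}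
    {x z : V} (hzX : z ∈ cones G X) (hz : G.neighborSet z ⊆ X) (hxX : x ∈ X) {s : Finset V}
    (hs : G.IsNIndepSet X.card s) (hsx : ↑s ⊆ G.neighborSet x \ insert z ↑X) :
    (cones G (insert z ↑X)).Nonempty := by
  classical
  have hzs : z ∉ s := fun h => (hsx h).2 (Set.mem_insert z _)
  have hz' : z ∉ X := fun h => G.irrefl (hzX z h)
  have : Nonempty V := ⟨z⟩
  obtain ⟨f, hf⟩ : ∃ f : V → V, Set.BijOn f ↑(insert z s) ↑(insert z X) :=
    (insert z s).finite_toSet.exists_bijOn_of_encard_eq (by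
      simp only [Set.encard_coe_eq_coe_finsetCard, Finset.card_insert_of_notMem hzs,
        Finset.card_insert_of_notMem hz', hs.card_eq])
  have hindep : G.IsIndepSet ↑(insert z s) := by
    rw [Finset.coe_insert, SimpleGraph.isIndepSet_iff]
    refine hs.isIndepSet.insert fun y hy _ =>
      ⟨fun h => (hsx hy).2 (Set.mem_insert_of_mem z (hz h)),
        fun h => (hsx hy).2 (Set.mem_insert_of_mem z (hz h.symm))⟩
  rw [← Finset.coe_insert, ← hf.image_eq]
  refine hME.cones_image_nonempty (isMonOn_of_isIndepSet hindep hf.injOn) ⟨x, fun y hy => ?_⟩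
  rcases Finset.mem_insert.1 hy with rfl | hy
  exacts [(hzX x hxX).symm, (hsx hy).1]

theorem IsMEHom.exists_cones_insert_nonempty [Infinite V] (hME : IsMEHom G)
    (hch : HasCherry G) {X : Finset V} (hX : IsBadSet G X) :
    ∃ z ∈ cones G X, (cones G (insert z ↑X)).Nonempty := by
  by_contra! hmax
  obtain ⟨z, hz⟩ := hX.1
  have hnbr : G.neighborSet z ⊆ X := fun q hzq => by_contra fun hqX =>
    (hME.cones_insert_nonempty hz hqX hzq).ne_empty (hmax z hz)
  obtain ⟨x, hxX, hx⟩ : ∃ x ∈ X, (G.neighborSet x).Infinite := by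
    by_contra! hfin
    refine Set.infinite_univ (((X.finite_toSet.biUnion hfin).insert z).subset fun p _ => ?_)
    rcases eq_or_ne p z with rfl | hpz
    · exact Set.mem_insert p _
    obtain ⟨w, hwp, hwz⟩ := hME.exists_adj_adj_of_hasCherry hch hpz
    exact Set.mem_insert_of_mem z (Set.mem_biUnion (hnbr hwz.symm) hwp)
  obtain ⟨s, hsM, hs | hs⟩ := G.exists_isNClique_or_isNClique_compl
    (hx.sdiff ((X.finite_toSet).insert z)) (X.card + 1) X.card
  · have := hME.card_le_of_isClique hnbr hs.isClique (hsM.trans Set.sdiff_subset)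
    have := hs.card_eq
    omega
  · exact (hME.cones_insert_nonempty_of_isNIndepSet hz hnbr hxX
      (G.isNClique_compl.1 hs) hsM).ne_empty (hmax z hz)

theorem IsMEHom.not_isBadSet [Infinite V] (hME : IsMEHom G) (hch : HasCherry G)
    (X : Finset V) : ¬ IsBadSet G X := by
  classical
  induction hn : (cones G X).ncard using Nat.strong_induction_on generalizing X with
  | _ n ih =>
  intro hX
  obtain ⟨z, hz, hne⟩ := hME.exists_cones_insert_nonempty hch hX
  have hssub := cones_insert_ssubset hz
  have hbad : IsBadSet G (insert z X) := by
    rw [IsBadSet, Finset.coe_insert]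
    exact ⟨hne, hX.2.subset hssub.subset⟩
  have hlt : (cones G ↑(insert z X)).ncard < n := by
    rw [← hn, Finset.coe_insert]
    exact Set.ncard_lt_ncard hssub hX.2
  exact ih _ hlt (insert z X) rfl hbad

theorem cliqueSum_adj {ι κ : Type} {p q : ι × κ} :
    (cliqueSum ι κ).Adj p q ↔ p ≠ q ∧ p.1 = q.1 := by
  rw [cliqueSum, SimpleGraph.fromRel_adj, eq_comm (a := q.1), or_self]

def isoCliqueSum {ι κ : Type} (π : V → ι) (hadj : ∀ u v, G.Adj u v ↔ u ≠ v ∧ π u = π v)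
    (e : ∀ i, {v // π v = i} ≃ κ) : G ≃g cliqueSum ι κ where
  toEquiv := (Equiv.sigmaFiberEquiv π).symm.trans
    ((Equiv.sigmaCongrRight e).trans (Equiv.sigmaEquivProd ι κ))
  map_rel_iff' {u v} := by
    rw [cliqueSum_adj, hadj, (Equiv.injective _).ne_iff]
    rfl

def closedNbhd (G : SimpleGraph V) (u : V) : Set V := insert u (G.neighborSet u)

theorem mem_closedNbhd_comm {u v : V} : v ∈ closedNbhd G u ↔ u ∈ closedNbhd G v := by
  simp only [closedNbhd, Set.mem_insert_iff, SimpleGraph.mem_neighborSet, eq_comm (a := u),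
    G.adj_comm u v]

theorem adj_of_not_hasCherry (hnc : ¬ HasCherry G) {u v w : V} (hwu : G.Adj w u)
    (hwv : G.Adj w v) (huv : u ≠ v) : G.Adj u v := by
  by_contra h
  exact hnc ⟨u, v, w, huv, h, hwu, hwv⟩

theorem mem_closedNbhd_trans (hnc : ¬ HasCherry G) {u v w : V} (hv : v ∈ closedNbhd G u)
    (hw : w ∈ closedNbhd G v) : w ∈ closedNbhd G u := by
  rcases hv with rfl | huv
  · exact hw
  rcases hw with rfl | hvw
  · exact Or.inr huv
  rcases eq_or_ne w u with rfl | hwu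
  · exact Set.mem_insert w _
  · exact Or.inr (adj_of_not_hasCherry hnc huv.symm hvw hwu.symm)

theorem adj_of_mem_closedNbhd (hnc : ¬ HasCherry G) {u w w' : V} (hw : w ∈ closedNbhd G u)
    (hw' : w' ∈ closedNbhd G u) (hne : w ≠ w') : G.Adj w w' :=
  (mem_closedNbhd_trans hnc (mem_closedNbhd_comm.1 hw) hw').resolve_left hne.symm

def cliqueSetoid (hnc : ¬ HasCherry G) : Setoid V where
  r u v := v ∈ closedNbhd G u
  iseqv := ⟨fun u => Set.mem_insert u _, mem_closedNbhd_comm.1, mem_closedNbhd_trans hnc⟩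

theorem IsMEHom.encard_closedNbhd_le (hME : IsMEHom G) (hnc : ¬ HasCherry G) (u v : V) :
    (closedNbhd G u).encard ≤ (closedNbhd G v).encard := by
  obtain ⟨F, hF, hFu⟩ := hME.exists_isHomEndo_apply_eq u v
  refine Set.encard_le_encard_of_injOn (f := F) (fun w hw => ?_) fun w hw w' hw' h => ?_
  · rcases hw with rfl | huw
    exacts [hFu ▸ Set.mem_insert _ _, Or.inr (hFu ▸ hF huw)]
  · by_contra hne
    exact (hF (adj_of_mem_closedNbhd hnc hw hw' hne)).ne h

theorem nonempty_iso_cliqueSum [Countable V] [Infinite V] (hnc : ¬ HasCherry G) {n : ℕ}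
    (hn : ∀ u, (closedNbhd G u).encard = n) : Nonempty (G ≃g cliqueSum ℕ (Fin n)) := by
  let s := cliqueSetoid hnc
  have hfib (u : V) : {v | Quotient.mk s v = Quotient.mk s u} = closedNbhd G u := by
    ext v
    exact Quotient.eq.trans mem_closedNbhd_comm
  have hfin (u : V) : (closedNbhd G u).Finite := Set.finite_of_encard_eq_coe (hn u)
  have : Infinite (Quotient s) := by
    refine Set.infinite_univ_iff.1 fun hQ => Set.infinite_univ
      (Set.Finite.of_finite_fibers (Quotient.mk s) (hQ.subset (Set.subset_univ _))
        fun q _ => ?_)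
    induction q using Quotient.ind with
    | _ u => simpa [Set.preimage, hfib] using hfin u
  obtain ⟨σ⟩ : Nonempty (Quotient s ≃ ℕ) := nonempty_equiv_of_countable
  have hfib' (i : ℕ) : {v | σ (Quotient.mk s v) = i} = closedNbhd G (σ.symm i).out := by
    rw [← hfib, Quotient.out_eq]
    ext v
    exact σ.eq_symm_apply.symm
  refine ⟨isoCliqueSum (σ ∘ Quotient.mk s) (fun u v => ?_) fun i =>
    (Equiv.setCongr (hfib' i)).trans ?_⟩
  · rw [Function.comp_apply, Function.comp_apply, σ.injective.eq_iff, Quotient.eq]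
    change _ ↔ u ≠ v ∧ (v = u ∨ G.Adj u v)
    exact ⟨fun h => ⟨h.ne, Or.inr h⟩, fun ⟨hne, h⟩ => h.resolve_left hne.symm⟩
  · have := (hfin (σ.symm i).out).to_subtype
    exact Finite.equivFinOfCardEq (by rw [Nat.card_coe_set_eq, Set.ncard_def, hn]; rfl)

theorem IsMEHom.exists_iso_cliqueSum [Countable V] [Infinite V] (hME : IsMEHom G)
    (hnc : ¬ HasCherry G) {X : Finset V} (hX : IsBadSet G X) :
    ∃ n : ℕ, 2 ≤ n ∧ Nonempty (G ≃g cliqueSum ℕ (Fin n)) := by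
  obtain ⟨z, hz⟩ := hX.1
  obtain ⟨x, hx⟩ : X.Nonempty := by
    rcases X.eq_empty_or_nonempty with rfl | hne
    · exact absurd (hX.2.subset fun v _ => by simp [cones]) Set.infinite_univ
    · exact hne
  have hsub : closedNbhd G z ⊆ insert z (↑X ∪ cones G X) := by
    rintro v (rfl | hzv)
    · exact Set.mem_insert _ _
    by_cases hvX : v ∈ X
    · exact Or.inr (Or.inl hvX)
    · exact Or.inr (Or.inr fun y hy => adj_of_not_hasCherry hnc hzv (hz y hy)
        (ne_of_mem_of_not_mem hy hvX).symm)
  have hfin : (closedNbhd G z).Finite := ((X.finite_toSet.union hX.2).insert z).subset hsub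
  refine ⟨(closedNbhd G z).ncard, ?_, nonempty_iso_cliqueSum hnc fun u => ?_⟩
  · exact (Set.one_lt_ncard hfin).2
      ⟨z, Set.mem_insert z _, x, Or.inr (hz x hx), G.ne_of_adj (hz x hx)⟩
  · rw [hfin.cast_ncard_eq]
    exact le_antisymm (hME.encard_closedNbhd_le hnc u z) (hME.encard_closedNbhd_le hnc z u)

end MEHomogeneous

theorem IsMEHom.of_iso {V W : Type} {G : SimpleGraph V} {H : SimpleGraph W} (hH : IsMEHom H)
    (φ : G ≃g H) : IsMEHom G := by
  classical
  intro A f hf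
  have hf' : IsMonOn H (A.map φ.toEquiv.toEmbedding) (φ ∘ f ∘ φ.symm) := by
    constructor
    · intro u v hu hv huv
      obtain ⟨a, ha, rfl⟩ := Finset.mem_map.1 hu
      obtain ⟨b, hb, rfl⟩ := Finset.mem_map.1 hv
      simpa using φ.map_adj_iff.2 (hf.1 ha hb (φ.map_adj_iff.1 (by simpa using huv)))
    · intro u hu v hv huv
      obtain ⟨a, ha, rfl⟩ := Finset.mem_map.1 hu
      obtain ⟨b, hb, rfl⟩ := Finset.mem_map.1 hv
      simpa using hf.2 ha hb (by simpa using huv)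
  obtain ⟨F, ⟨hFhom, hFsurj⟩, hFf⟩ := hH _ _ hf'
  refine ⟨φ.symm ∘ F ∘ φ,
    ⟨fun u v huv => φ.symm.map_adj_iff.2 (hFhom (φ.map_adj_iff.2 huv)),
      φ.symm.surjective.comp (hFsurj.comp φ.surjective)⟩, fun a ha => ?_⟩
  simpa using congrArg φ.symm (hFf (φ a) (Finset.mem_map_of_mem _ ha))

theorem Nat.exists_surjective_eqOn (T : Finset ℕ) (t : ℕ → ℕ) :
    ∃ τ : ℕ → ℕ, Function.Surjective τ ∧ Set.EqOn τ t T := by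
  classical
  let N := T.sup id + 1
  refine ⟨fun i => if i ∈ T then t i else i - N, fun j => ⟨j + N, ?_⟩, fun i hi => if_pos hi⟩
  have : j + N ∉ T := fun h => by
    have := T.le_sup (f := id) h
    simp only [id] at this
    omega
  simp [this]

theorem Set.InjOn.exists_perm_eqOn {κ : Type} [Finite κ] {s : Set κ} {g : κ → κ}
    (hg : Set.InjOn g s) : ∃ σ : Equiv.Perm κ, Set.EqOn σ g s := by
  have := Fintype.ofFinite κ
  obtain ⟨σ, hσ⟩ := Set.MapsTo.exists_equiv_extend_of_card_eq (t := Finset.univ)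
    Finset.card_univ.symm (fun _ _ => Finset.mem_coe.2 (Finset.mem_univ _)) hg
  exact ⟨σ.trans (Equiv.subtypeUnivEquiv Finset.mem_univ), hσ⟩

theorem isHomEndo_cliqueSum {ι κ : Type} (τ : ι → ι) (σ : ι → Equiv.Perm κ) :
    IsHomEndo (cliqueSum ι κ) fun p => (τ p.1, σ p.1 p.2) := by
  rintro ⟨i, x⟩ ⟨j, y⟩ hxy
  obtain ⟨hne, rfl : i = j⟩ := cliqueSum_adj.1 hxy
  exact cliqueSum_adj.2 ⟨fun h => hne (by simpa using h), rfl⟩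

theorem isMEHom_cliqueSum (κ : Type) [Finite κ] : IsMEHom (cliqueSum ℕ κ) := by
  classical
  intro A f hf
  have hfst {a b} (ha : a ∈ A) (hb : b ∈ A) (h : a.1 = b.1) : (f a).1 = (f b).1 := by
    rcases eq_or_ne a b with rfl | hne
    · rfl
    · exact (cliqueSum_adj.1 (hf.1 ha hb (cliqueSum_adj.2 ⟨hne, h⟩))).2
  let t i := if h : ∃ x, (i, x) ∈ A then (f (i, h.choose)).1 else 0
  have ht {a} (ha : a ∈ A) : t a.1 = (f a).1 := by
    have h : ∃ x, (a.1, x) ∈ A := ⟨a.2, ha⟩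
    simp only [t, dif_pos h]
    exact hfst h.choose_spec ha rfl
  obtain ⟨τ, hτ, hτt⟩ := Nat.exists_surjective_eqOn (A.image Prod.fst) t
  have hσ (i : ℕ) : ∃ σ : Equiv.Perm κ, Set.EqOn σ (fun x => (f (i, x)).2) {x | (i, x) ∈ A} :=
    Set.InjOn.exists_perm_eqOn fun x hx y hy h =>
      congrArg Prod.snd (hf.2 hx hy (Prod.ext (hfst hx hy rfl) h))
  choose σ hσ using hσ
  refine ⟨fun p => (τ p.1, σ p.1 p.2), ⟨isHomEndo_cliqueSum τ σ, fun q => ?_⟩,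
    fun a ha => ?_⟩
  · obtain ⟨i, hi⟩ := hτ q.1
    exact ⟨(i, (σ i).symm q.2), by simp [hi]⟩
  · exact Prod.ext ((hτt (Finset.mem_image_of_mem _ ha)).trans (ht ha)) (hσ a.1 ha)

/-- A countably infinite graph is ME-homogeneous iff it is MB-homogeneous or
isomorphic to `I_ω[K_n]` for some finite `n ≥ 2`. -/
theorem stmt_19 {V : Type} [Countable V] [Infinite V] (G : SimpleGraph V) :
    IsMEHom G ↔
      (IsMBHom G ∨ ∃ n : ℕ, 2 ≤ n ∧ Nonempty (G ≃g cliqueSum ℕ (Fin n))) := by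
  refine ⟨fun hME => ?_, ?_⟩
  · by_cases hbad : ∃ X, IsBadSet G X
    · obtain ⟨X, hX⟩ := hbad
      exact Or.inr (hME.exists_iso_cliqueSum (fun hch => hME.not_isBadSet hch X hX) hX)
    · exact Or.inl (hME.isMBHom (not_exists.1 hbad))
  · rintro (hMB | ⟨n, -, ⟨φ⟩⟩)
    · exact hMB.isMEHom
    · exact (isMEHom_cliqueSum (Fin n)).of_iso φ
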